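/- Contraction of AFEM from a one-step reduction: suppose nonnegative sequences (δ_k), (o_k), (d_k) satisfy δ_{k+1} = δ_k − d_k, Λ₁ δ_k ≤ d_k + Λ₂ o_k with Λ₁ ∈ (0,1), Λ₂ > 0, and o_{k+1} ≤ ρ₁ o_k + ρ₂ d_k with ρ₁ ∈ (0,1), ρ₂ > 0. Then there exist γ > 0 and μ̂ ∈ (0,1) such that δ_{k+1} + γ o_{k+1} ≤ μ̂ (δ_k + γ o_k) for all k; in particular δ_k → 0 and o_k → 0 geometrically. -/
import Mathlib


open Filter

/-- Contraction of AFEM from a one-step reduction: if nonnegative sequences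
`δ`, `o`, `d` satisfy `δ_{k+1} = δ_k − d_k`, `Λ₁ δ_k ≤ d_k + Λ₂ o_k` with
`Λ₁ ∈ (0,1)`, `Λ₂ > 0`, and `o_{k+1} ≤ ρ₁ o_k + ρ₂ d_k` with `ρ₁ ∈ (0,1)`,
`ρ₂ > 0`, then there exist `γ > 0` and `μ̂ ∈ (0,1)` such that
`δ_{k+1} + γ o_{k+1} ≤ μ̂ (δ_k + γ o_k)` for all `k`; in particular
`δ_k → 0` and `o_k → 0`. -/
theorem afem_contraction
    (δ o d : ℕ → ℝ)
    (hδ : ∀ k, 0 ≤ δ k) (ho : ∀ k, 0 ≤ o k) (hd : ∀ k, 0 ≤ d k)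
    (Λ₁ Λ₂ ρ₁ ρ₂ : ℝ)
    (hΛ₁ : Λ₁ ∈ Set.Ioo (0:ℝ) 1) (hΛ₂ : 0 < Λ₂)
    (hρ₁ : ρ₁ ∈ Set.Ioo (0:ℝ) 1) (hρ₂ : 0 < ρ₂)
    (heq : ∀ k, δ (k + 1) = δ k - d k)
    (h1 : ∀ k, Λ₁ * δ k ≤ d k + Λ₂ * o k)
    (h2 : ∀ k, o (k + 1) ≤ ρ₁ * o k + ρ₂ * d k) :
    ∃ γ > (0:ℝ), ∃ μ ∈ Set.Ioo (0:ℝ) 1,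
      (∀ k, δ (k + 1) + γ * o (k + 1) ≤ μ * (δ k + γ * o k)) ∧
      Tendsto δ atTop (nhds 0) ∧ Tendsto o atTop (nhds 0) := by
  obtain ⟨hΛ₁0, hΛ₁1⟩ := hΛ₁
  obtain ⟨hρ₁0, hρ₁1⟩ := hρ₁
  set μ₀ : ℝ := (ρ₁ + 1) / 2 with hμ₀def
  have hμ₀ρ : ρ₁ < μ₀ := by simp only [hμ₀def]; linarith
  have hμ₀1 : μ₀ < 1 := by simp only [hμ₀def]; linarith
  have hμ₀0 : 0 < μ₀ := lt_trans hρ₁0 hμ₀ρ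
  set c : ℝ := (μ₀ - ρ₁) / ρ₂ with hcdef
  have hc0 : 0 < c := div_pos (by linarith) hρ₂
  have hμ₀c : μ₀ - ρ₁ = c * ρ₂ := by
    rw [hcdef, div_mul_cancel₀ _ hρ₂.ne']
  set β : ℝ := c / (Λ₂ + c) with hβdef
  have hΛc : 0 < Λ₂ + c := by linarith
  have hβ0 : 0 < β := div_pos hc0 hΛc
  have hβ1 : β < 1 := by
    rw [hβdef, div_lt_one hΛc]; linarith
  have hβc : β * (Λ₂ + c) = c := by
    rw [hβdef, div_mul_cancel₀ _ hΛc.ne']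
  set γ : ℝ := (1 - β) / ρ₂ with hγdef
  have hγ0 : 0 < γ := div_pos (by linarith) hρ₂
  have hγρ₂ : γ * ρ₂ = 1 - β := by
    rw [hγdef, div_mul_cancel₀ _ hρ₂.ne']
  clear_value μ₀ c β γ
  have hβΛ₂ : β * Λ₂ = (μ₀ - ρ₁) * γ := by
    linear_combination hβc - c * hγρ₂ - γ * hμ₀c
  set μ : ℝ := max (1 - β * Λ₁) μ₀ with hμdef
  have hμ0 : 0 < μ := lt_of_lt_of_le hμ₀0 (le_max_right _ _)
  have hμ1 : μ < 1 := by
    apply max_lt _ hμ₀1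
    nlinarith [mul_pos hβ0 hΛ₁0]
  have h1μ : 1 - β * Λ₁ ≤ μ := le_max_left _ _
  have hμ₀μ : μ₀ ≤ μ := le_max_right _ _
  clear_value μ
  refine ⟨γ, hγ0, μ, ⟨hμ0, hμ1⟩, ?_⟩
  have key : ∀ k, δ (k + 1) + γ * o (k + 1) ≤ μ * (δ k + γ * o k) := by
    intro k
    have h' : γ * o (k + 1) ≤ γ * (ρ₁ * o k + ρ₂ * d k) :=
      mul_le_mul_of_nonneg_left (h2 k) hγ0.le
    have hF : γ * ρ₂ * d k = (1 - β) * d k := by rw [hγρ₂]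
    have hA : δ (k + 1) + γ * o (k + 1) ≤ δ k - β * d k + γ * ρ₁ * o k := by
      have he := heq k
      nlinarith [h', hF]
    have hB : β * (Λ₁ * δ k) ≤ β * (d k + Λ₂ * o k) :=
      mul_le_mul_of_nonneg_left (h1 k) hβ0.le
    have hE : β * Λ₂ * o k = (μ₀ - ρ₁) * γ * o k := by rw [hβΛ₂]
    have hC : δ k - β * d k + γ * ρ₁ * o k ≤
        (1 - β * Λ₁) * δ k + (μ₀ * γ) * o k := by nlinarith [hB, hE]
    have hD : (1 - β * Λ₁) * δ k + (μ₀ * γ) * o k ≤ μ * (δ k + γ * o k) := by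
      nlinarith [mul_le_mul_of_nonneg_right h1μ (hδ k),
        mul_le_mul_of_nonneg_right hμ₀μ (mul_nonneg hγ0.le (ho k))]
    linarith
  have hS : ∀ k, δ k + γ * o k ≤ (δ 0 + γ * o 0) * μ ^ k := by
    intro k
    induction k with
    | zero => simp
    | succ n ih =>
      calc δ (n + 1) + γ * o (n + 1) ≤ μ * (δ n + γ * o n) := key n
        _ ≤ μ * ((δ 0 + γ * o 0) * μ ^ n) := mul_le_mul_of_nonneg_left ih hμ0.le
        _ = (δ 0 + γ * o 0) * μ ^ (n + 1) := by ring
  have hpow : Tendsto (fun k : ℕ => μ ^ k) atTop (nhds 0) :=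
    tendsto_pow_atTop_nhds_zero_of_lt_one hμ0.le hμ1
  refine ⟨key, ?_, ?_⟩
  · have hgeo : Tendsto (fun k => (δ 0 + γ * o 0) * μ ^ k) atTop (nhds 0) := by
      simpa using hpow.const_mul (δ 0 + γ * o 0)
    exact squeeze_zero hδ
      (fun k => by linarith [hS k, mul_nonneg hγ0.le (ho k)]) hgeo
  · have hgeo : Tendsto (fun k => ((δ 0 + γ * o 0) / γ) * μ ^ k) atTop (nhds 0) := by
      simpa using hpow.const_mul ((δ 0 + γ * o 0) / γ)
    refine squeeze_zero ho (fun k => ?_) hgeo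
    rw [div_mul_eq_mul_div, le_div_iff₀ hγ0]
    linarith [hS k, hδ k]
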